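/- arXiv:2411.16950 — 3 statements merged into one kernel-verified Lean document; each statement's English description precedes it below -/
import Mathlib

section
/- Cameron's theorem: every countably infinite strongly indivisible graph is isomorphic to the complete graph K_ω, the empty graph \overline{K}_ω, or the random graph R. -/
/-- A countable graph is strongly indivisible if for every partition of its vertex set
into two pieces, the induced subgraph on at least one piece is isomorphic to the graph. -/
def StronglyIndivisible (G : SimpleGraph ℕ) : Prop :=
  ∀ X₀ X₁ : Set ℕ, Disjoint X₀ X₁ → X₀ ∪ X₁ = Set.univ →
    Nonempty (G.induce X₀ ≃g G) ∨ Nonempty (G.induce X₁ ≃g G)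

/-- A graph `G` satisfies the extension axiom if for all disjoint finite sets `A`, `B` of
vertices there is a vertex `x ∉ A ∪ B` adjacent to all of `A` and none of `B`.  The
random graph is the unique countable graph satisfying the extension axiom. -/
def ExtensionAxiom {V : Type*} (G : SimpleGraph V) : Prop :=
  ∀ A B : Finset V, Disjoint A B →
    ∃ x, x ∉ A ∧ x ∉ B ∧ (∀ a ∈ A, G.Adj x a) ∧ (∀ b ∈ B, ¬ G.Adj x b)

/-!
A strongly indivisible graph `G` that is neither complete nor empty has no isolated vertex:
splitting off the isolated vertices, either `G` embeds onto them (so `G` has no edges) or onto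
the rest, where an image of an isolated vertex would stay isolated. The complement of `G` is
again strongly indivisible, so dually no vertex of `G` is adjacent to all others.

The extension axiom then follows by induction on `|A| + |B|`. If no vertex witnesses
`(A ∪ {a}, B)`, let `S` be the set of witnesses of `(A, B)`; then `a` is isolated in `S ∪ {a}`,
so `G` must embed onto the complement of `S ∪ {a}`. This complement contains `A` and `B`, and by
induction it contains a witness of `(A, B)`, i.e. a point of `S`. When `A` is empty the same
argument runs in the complement. A back-and-forth argument finally identifies all countable
graphs satisfying the extension axiom.
-/

namespace SimpleGraph

variable {V W : Type*}

def IsExtensionWitness (G : SimpleGraph V) (A B : Set V) (x : V) : Prop :=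
  x ∉ A ∧ x ∉ B ∧ (∀ a ∈ A, G.Adj x a) ∧ ∀ b ∈ B, ¬G.Adj x b

lemma isExtensionWitness_compl {G : SimpleGraph V} {A B : Set V} {x : V} :
    Gᶜ.IsExtensionWitness A B x ↔ G.IsExtensionWitness B A x := by
  simp only [IsExtensionWitness, compl_adj, not_and, not_not]
  constructor
  · rintro ⟨hA, hB, hadj, hnadj⟩
    exact ⟨hB, hA, fun b hb => hnadj b hb (ne_of_mem_of_not_mem hb hB).symm,
      fun a ha => (hadj a ha).2⟩
  · rintro ⟨hB, hA, hadj, hnadj⟩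
    exact ⟨hA, hB, fun a ha => ⟨(ne_of_mem_of_not_mem ha hA).symm, hnadj a ha⟩,
      fun b hb _ => hadj b hb⟩

lemma Embedding.isExtensionWitness_image_iff {G : SimpleGraph V} {H : SimpleGraph W}
    (φ : G ↪g H) {A B : Set V} {x : V} :
    H.IsExtensionWitness (φ '' A) (φ '' B) (φ x) ↔ G.IsExtensionWitness A B x := by
  simp [IsExtensionWitness, φ.injective.mem_set_image]

/-- Strong indivisibility on an arbitrary vertex type, phrased with self-embeddings so that it
passes to the complement. -/
def IsStronglyIndivisible (G : SimpleGraph V) : Prop :=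
  ∀ X : Set V, ∃ φ : G ↪g G, Set.range φ = X ∨ Set.range φ = Xᶜ

namespace IsStronglyIndivisible

variable {G : SimpleGraph V}

lemma compl (hG : G.IsStronglyIndivisible) : Gᶜ.IsStronglyIndivisible := fun X =>
  let ⟨φ, hφ⟩ := hG X
  ⟨Embedding.complEquiv φ, hφ⟩

lemma exists_adj (hG : G.IsStronglyIndivisible) (hbot : G ≠ ⊥) (v : V) : ∃ x, G.Adj x v := by
  by_contra! hv
  obtain ⟨φ, hφ | hφ⟩ := hG {w | ∀ x, ¬G.Adj x w}
  · refine hbot (edgeSet_eq_empty.1 (Set.eq_empty_iff_forall_notMem.2 ?_))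
    rintro ⟨u, w⟩ huw
    have hw : φ w ∈ Set.range φ := Set.mem_range_self w
    rw [hφ] at hw
    exact hw _ (φ.map_adj_iff.2 huw)
  · have hv' : φ v ∈ Set.range φ := Set.mem_range_self v
    rw [hφ] at hv'
    simp only [Set.mem_compl_iff, Set.mem_ofPred_eq, not_forall, not_not] at hv'
    obtain ⟨x, hx⟩ := hv'
    obtain ⟨y, rfl⟩ : x ∈ Set.range φ := by
      rw [hφ]
      exact fun hx' => hx' _ hx.symm
    exact hv y (φ.map_adj_iff.1 hx)

lemma exists_isExtensionWitness_insert (hG : G.IsStronglyIndivisible) (hbot : G ≠ ⊥)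
    {a : V} {A B : Set V} (haA : a ∉ A) (haB : a ∉ B)
    (ih : ∀ φ : G ↪g G, A ⊆ Set.range φ → B ⊆ Set.range φ →
      ∃ x, G.IsExtensionWitness (φ ⁻¹' A) (φ ⁻¹' B) x) :
    ∃ x, G.IsExtensionWitness (insert a A) B x := by
  by_contra! hno
  set S := {x | G.IsExtensionWitness A B x}
  have hS : ∀ s ∈ S, s ≠ a → ¬G.Adj s a := fun s ⟨hsA, hsB, hsadj, hsnadj⟩ hsa hadj =>
    hno s ⟨by simp [hsa, hsA], hsB, Set.forall_mem_insert.2 ⟨hadj, hsadj⟩, hsnadj⟩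
  obtain ⟨φ, hφ | hφ⟩ := hG (insert a S)
  · obtain ⟨v, rfl⟩ : a ∈ Set.range φ := hφ ▸ Set.mem_insert a S
    obtain ⟨x, hx⟩ := hG.exists_adj hbot v
    have hφx : φ x ∈ insert (φ v) S := hφ ▸ Set.mem_range_self x
    have hx' := φ.map_adj_iff.2 hx
    exact hS _ (hφx.resolve_left hx'.ne) hx'.ne hx'
  · have hAB : ∀ c, c ∈ A ∨ c ∈ B → c ∈ Set.range φ := by
      rintro c hc
      rw [hφ, Set.mem_compl_iff, Set.mem_insert_iff, not_or]
      refine ⟨?_, fun ⟨hcA, hcB, _⟩ => hc.elim hcA hcB⟩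
      rintro rfl
      exact hc.elim haA haB
    have hA : A ⊆ Set.range φ := fun c hc => hAB c (.inl hc)
    have hB : B ⊆ Set.range φ := fun c hc => hAB c (.inr hc)
    obtain ⟨x, hx⟩ := ih φ hA hB
    rw [← φ.isExtensionWitness_image_iff, Set.image_preimage_eq_of_subset hA,
      Set.image_preimage_eq_of_subset hB] at hx
    exact (hφ ▸ Set.mem_range_self x : φ x ∈ (insert a S)ᶜ) (.inr hx)

open Finset in
lemma exists_isExtensionWitness_insert_of_card (hG : G.IsStronglyIndivisible) (hbot : G ≠ ⊥)
    {n : ℕ} (ih : ∀ A B : Finset V, Disjoint A B → #A + #B = n →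
      ∃ x, G.IsExtensionWitness A B x)
    {a : V} {A B : Finset V} (haA : a ∉ A) (haB : a ∉ B) (hAB : Disjoint A B)
    (hcard : #A + #B = n) : ∃ x, G.IsExtensionWitness (insert a ↑A) B x := by
  classical
  refine hG.exists_isExtensionWitness_insert hbot haA haB fun φ hA hB => ?_
  have card_preimage_eq : ∀ C : Finset V, ↑C ⊆ Set.range φ →
      #(C.preimage φ φ.injective.injOn) = #C := fun C hC => by
    rw [card_preimage, filter_true_of_mem fun c hc => hC hc]
  simpa using ih (A.preimage φ φ.injective.injOn) (B.preimage φ φ.injective.injOn)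
    (disjoint_coe.1 (by simpa using (disjoint_coe.2 hAB).preimage φ))
    (by rw [card_preimage_eq A hA, card_preimage_eq B hB, hcard])

open Finset in
theorem extensionAxiom (hG : G.IsStronglyIndivisible) (hbot : G ≠ ⊥) (htop : G ≠ ⊤) :
    ExtensionAxiom G := by
  classical
  suffices ∀ n, ∀ H : SimpleGraph V, H.IsStronglyIndivisible → H ≠ ⊥ → H ≠ ⊤ →
      ∀ A B : Finset V, Disjoint A B → #A + #B = n → ∃ x, H.IsExtensionWitness A B x from
    fun A B hAB => this _ G hG hbot htop A B hAB rfl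
  intro n
  induction n with
  | zero =>
    rintro H - hbot - A B - hcard
    obtain ⟨x, -, -⟩ := ne_bot_iff_exists_adj.1 hbot
    obtain ⟨rfl, rfl⟩ : A = ∅ ∧ B = ∅ := by simpa using hcard
    exact ⟨x, by simp [IsExtensionWitness]⟩
  | succ n ih =>
    intro H hH hbot htop A B hAB hcard
    rcases A.eq_empty_or_nonempty with rfl | ⟨a, ha⟩
    · -- in `Hᶜ` the vertices of `B` become the required neighbours
      rw [card_empty, zero_add] at hcard
      obtain ⟨b, hb⟩ : B.Nonempty := card_pos.1 (by omega)
      have hbot' : Hᶜ ≠ ⊥ := by rwa [Ne, compl_eq_bot]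
      have htop' : Hᶜ ≠ ⊤ := by rwa [Ne, compl_eq_top]
      have := hH.compl.exists_isExtensionWitness_insert_of_card hbot'
        (ih Hᶜ hH.compl hbot' htop') (notMem_erase b B) (notMem_empty b)
        (disjoint_empty_right _) (by rw [card_erase_of_mem hb, card_empty]; omega)
      simpa [isExtensionWitness_compl, Set.insert_eq_of_mem (mem_coe.2 hb)] using this
    · have := hH.exists_isExtensionWitness_insert_of_card hbot (ih H hH hbot htop)
        (notMem_erase a A) (Finset.disjoint_left.1 hAB ha)
        (disjoint_of_subset_left (erase_subset a A) hAB)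
        (by rw [card_erase_of_mem ha]; have := card_pos.2 ⟨a, ha⟩; omega)
      simpa [Set.insert_eq_of_mem (mem_coe.2 ha)] using this

end IsStronglyIndivisible

def IsPartialIso (G : SimpleGraph V) (H : SimpleGraph W) (s : Set (V × W)) : Prop :=
  ∀ p ∈ s, ∀ q ∈ s, (p.1 = q.1 ↔ p.2 = q.2) ∧ (G.Adj p.1 q.1 ↔ H.Adj p.2 q.2)

namespace IsPartialIso

variable {G : SimpleGraph V} {H : SimpleGraph W} {s : Set (V × W)}

lemma swap (hs : IsPartialIso G H s) : IsPartialIso H G (Prod.swap ⁻¹' s) :=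
  fun _ hp _ hq => ⟨(hs _ hp _ hq).1.symm, (hs _ hp _ hq).2.symm⟩

lemma insert_pair (hs : IsPartialIso G H s) {a : V} {b : W}
    (h : ∀ q ∈ s, (a = q.1 ↔ b = q.2) ∧ (G.Adj a q.1 ↔ H.Adj b q.2)) :
    IsPartialIso G H (insert (a, b) s) := by
  rintro _ (rfl | hp) _ (rfl | hq)
  · exact ⟨iff_of_true rfl rfl, iff_of_false (G.loopless.irrefl _) (H.loopless.irrefl _)⟩
  · exact h _ hq
  · exact ⟨eq_comm.trans ((h _ hp).1.trans eq_comm),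
      (G.adj_comm _ _).trans ((h _ hp).2.trans (H.adj_comm _ _))⟩
  · exact hs _ hp _ hq

open Finset in
lemma exists_insert_left (hH : ExtensionAxiom H) {s : Finset (V × W)}
    (hs : IsPartialIso G H s) (a : V) : ∃ b, IsPartialIso G H (insert (a, b) ↑s) := by
  classical
  by_cases ha : ∃ p ∈ s, p.1 = a
  · obtain ⟨p, hp, rfl⟩ := ha
    exact ⟨p.2, hs.insert_pair fun q hq => hs p hp q hq⟩
  push Not at ha
  have hdisj : Disjoint ({p ∈ s | G.Adj a p.1}.image Prod.snd)
      ({p ∈ s | ¬G.Adj a p.1}.image Prod.snd) := by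
    simp only [Finset.disjoint_left, mem_image, mem_filter]
    rintro _ ⟨p, ⟨hp, hpa⟩, rfl⟩ ⟨q, ⟨hq, hqa⟩, hqp⟩
    exact hqa ((hs p hp q hq).1.2 hqp.symm ▸ hpa)
  obtain ⟨b, hbA, hbB, hbadj, hbnadj⟩ := hH _ _ hdisj
  refine ⟨b, hs.insert_pair fun q hq => ?_⟩
  by_cases hqa : G.Adj a q.1
  · have hq' : q.2 ∈ {p ∈ s | G.Adj a p.1}.image Prod.snd :=
      mem_image_of_mem _ (mem_filter.2 ⟨hq, hqa⟩)
    exact ⟨iff_of_false (ha q hq).symm (ne_of_mem_of_not_mem hq' hbA).symm,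
      iff_of_true hqa (hbadj _ hq')⟩
  · have hq' : q.2 ∈ {p ∈ s | ¬G.Adj a p.1}.image Prod.snd :=
      mem_image_of_mem _ (mem_filter.2 ⟨hq, hqa⟩)
    exact ⟨iff_of_false (ha q hq).symm (ne_of_mem_of_not_mem hq' hbB).symm,
      iff_of_false hqa (hbnadj _ hq')⟩

lemma exists_insert_right (hG : ExtensionAxiom G) {s : Finset (V × W)}
    (hs : IsPartialIso G H s) (b : W) : ∃ a, IsPartialIso G H (insert (a, b) ↑s) := by
  classical
  obtain ⟨a, ha⟩ := exists_insert_left (s := s.image Prod.swap) hG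
    (by simpa [Set.image_swap_eq_preimage_swap] using hs.swap) b
  refine ⟨a, ?_⟩
  convert ha.swap using 1
  ext ⟨x, y⟩
  simp [and_comm]

lemma iUnion {ι : Type*} {s : ι → Set (V × W)} (hdir : Directed (· ⊆ ·) s)
    (hs : ∀ i, IsPartialIso G H (s i)) : IsPartialIso G H (⋃ i, s i) := by
  simp only [IsPartialIso, Set.mem_iUnion]
  rintro p ⟨i, hp⟩ q ⟨j, hq⟩
  obtain ⟨k, hik, hjk⟩ := hdir i j
  exact hs k p (hik hp) q (hjk hq)

lemma nonempty_iso (hs : IsPartialIso G H s) (hdom : ∀ a, ∃ b, (a, b) ∈ s)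
    (hran : ∀ b, ∃ a, (a, b) ∈ s) : Nonempty (G ≃g H) := by
  choose f hf using hdom
  have hinj : f.Injective := fun a a' h => (hs _ (hf a) _ (hf a')).1.2 h
  have hsurj : f.Surjective := fun b =>
    let ⟨a, ha⟩ := hran b
    ⟨a, (hs _ (hf a) _ ha).1.1 rfl⟩
  exact ⟨⟨Equiv.ofBijective f ⟨hinj, hsurj⟩,
    fun {a a'} => (hs _ (hf a) _ (hf a')).2.symm⟩⟩

end IsPartialIso

end SimpleGraph

open SimpleGraph

theorem ExtensionAxiom.nonempty_iso {V W : Type*} [Countable V] [Countable W]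
    {G : SimpleGraph V} {H : SimpleGraph W} (hG : ExtensionAxiom G) (hH : ExtensionAxiom H) :
    Nonempty (G ≃g H) := by
  classical
  have : Nonempty V := let ⟨x, _⟩ := hG ∅ ∅ (Finset.disjoint_empty_left _); ⟨x⟩
  have : Nonempty W := let ⟨x, _⟩ := hH ∅ ∅ (Finset.disjoint_empty_left _); ⟨x⟩
  obtain ⟨v, hv⟩ := exists_surjective_nat V
  obtain ⟨w, hw⟩ := exists_surjective_nat W
  have step : ∀ (n : ℕ) (s : {s : Finset (V × W) // IsPartialIso G H s}),
      ∃ t : {t : Finset (V × W) // IsPartialIso G H t},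
        s.1 ⊆ t.1 ∧ (∃ b, (v n, b) ∈ t.1) ∧ ∃ a, (a, w n) ∈ t.1 := by
    rintro n ⟨s, hs⟩
    obtain ⟨b, hb⟩ := hs.exists_insert_left hH (v n)
    have hb' : IsPartialIso G H ↑(insert (v n, b) s) := by simpa using hb
    obtain ⟨a, ha⟩ := hb'.exists_insert_right hG (w n)
    refine ⟨⟨insert (a, w n) (insert (v n, b) s), by simpa using ha⟩, ?_, ⟨b, by simp⟩,
      ⟨a, by simp⟩⟩
    exact (Finset.subset_insert _ _).trans (Finset.subset_insert _ _)
  choose next hnext using step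
  let s : ℕ → {s : Finset (V × W) // IsPartialIso G H s} :=
    fun n => Nat.rec ⟨∅, by simp [IsPartialIso]⟩ next n
  have hmono : Monotone fun n => ((s n).1 : Set (V × W)) :=
    monotone_nat_of_le_succ fun n => Finset.coe_subset.2 (hnext n (s n)).1
  refine (IsPartialIso.iUnion hmono.directed_le fun n => (s n).2).nonempty_iso
    (fun a => ?_) (fun b => ?_) <;> simp only [Set.mem_iUnion, Finset.mem_coe]
  · obtain ⟨n, rfl⟩ := hv a
    obtain ⟨b, hb⟩ := (hnext n (s n)).2.1
    exact ⟨b, n + 1, hb⟩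
  · obtain ⟨n, rfl⟩ := hw b
    obtain ⟨a, ha⟩ := (hnext n (s n)).2.2
    exact ⟨a, n + 1, ha⟩

lemma StronglyIndivisible.isStronglyIndivisible {G : SimpleGraph ℕ}
    (h : StronglyIndivisible G) : G.IsStronglyIndivisible := by
  intro X
  have range_eq : ∀ {Y : Set ℕ} (e : G.induce Y ≃g G),
      Set.range ((Embedding.induce Y).comp e.symm.toEmbedding) = Y := fun e => by
    ext x
    exact ⟨fun ⟨u, hu⟩ => hu ▸ (e.symm u).2, fun hx => ⟨e ⟨x, hx⟩, by simp⟩⟩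
  rcases h X Xᶜ disjoint_compl_right (Set.union_compl_self X) with ⟨⟨e⟩⟩ | ⟨⟨e⟩⟩
  exacts [⟨_, .inl (range_eq e)⟩, ⟨_, .inr (range_eq e)⟩]

/-- **Cameron's theorem.** Every countably infinite strongly indivisible
graph is isomorphic to the complete graph `K_ω`, the empty graph `\overline{K}_ω`, or the
random graph (i.e. to any countable graph satisfying the extension axiom). -/
theorem cameron (G : SimpleGraph ℕ) (h : StronglyIndivisible G) :
    Nonempty (G ≃g (⊤ : SimpleGraph ℕ)) ∨
    Nonempty (G ≃g (⊥ : SimpleGraph ℕ)) ∨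
    (∀ R : SimpleGraph ℕ, ExtensionAxiom R → Nonempty (G ≃g R)) := by
  by_cases htop : G = ⊤
  · exact .inl ⟨htop ▸ .refl⟩
  by_cases hbot : G = ⊥
  · exact .inr (.inl ⟨hbot ▸ .refl⟩)
  exact .inr (.inr fun R hR =>
    (h.isStronglyIndivisible.extensionAxiom hbot htop).nonempty_iso hR)
end

section
/- Let G be a countably infinite graph with no isolated or universal vertices that is not a random graph, and let n ≥ 2 be least such that the extension axiom fails for some disjoint finite sets A, B with |A| + |B| = n. For any partition A ∪ B = U₀ ⊔ U₁ into nonempty pieces, define X₀ = U₀ ∪ {x ∉ U₁ : x is not correctly joined to U₀} and X₁ = G \ X₀. Then the induced subgraph on X₀ fails the extension axiom for (A ∩ U₀, B ∩ U₀) and the induced subgraph on X₁ fails the extension axiom for (A ∩ U₁, B ∩ U₁); consequently neither X₀ nor X₁ is isomorphic to G. -/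
/-- The extension axiom fails for the pair of disjoint finite sets `(A, B)` in `G`. -/
def FailingPair (G : SimpleGraph ℕ) (A B : Finset ℕ) : Prop :=
  Disjoint A B ∧
    ¬ ∃ x, x ∉ A ∧ x ∉ B ∧ (∀ a ∈ A, G.Adj x a) ∧ (∀ b ∈ B, ¬ G.Adj x b)

/-- `x` is not correctly joined to `U` (relative to the pair `(A, B)`): there is
`a ∈ A ∩ U` with `x` not adjacent to `a`, or `b ∈ B ∩ U` with `x` adjacent to `b`. -/
def NotCorrectlyJoined (G : SimpleGraph ℕ) (A B U : Finset ℕ) (x : ℕ) : Prop :=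
  (∃ a ∈ A ∩ U, ¬ G.Adj x a) ∨ (∃ b ∈ B ∩ U, G.Adj x b)

lemma transfer (G : SimpleGraph ℕ) (S : Set ℕ) (A' B' : Finset ℕ)
    (hA : ∀ a ∈ A', a ∈ S) (hB : ∀ b ∈ B', b ∈ S) (hd : Disjoint A' B')
    (hfail : ¬ ∃ x ∈ S, x ∉ A' ∧ x ∉ B' ∧ (∀ a ∈ A', G.Adj x a) ∧ (∀ b ∈ B', ¬ G.Adj x b))
    (f : G.induce S ≃g G) :
    ∃ A'' B'' : Finset ℕ, FailingPair G A'' B'' ∧ A''.card = A'.card ∧ B''.card = B'.card := by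
  classical
  set e : ℕ → ℕ := fun y => if h : y ∈ S then f ⟨y, h⟩ else 0 with he
  have heinj : ∀ y1 ∈ S, ∀ y2 ∈ S, e y1 = e y2 → y1 = y2 := by
    intro y1 h1 y2 h2 hy
    simp only [he, dif_pos h1, dif_pos h2] at hy
    have := f.injective hy
    exact congrArg Subtype.val this
  have hmemA : ∀ x, x ∈ A'.image e ↔ ∃ a ∈ A', e a = x := by
    intro x; simp [Finset.mem_image]
  refine ⟨A'.image e, B'.image e, ⟨?_, ?_⟩, ?_, ?_⟩
  · rw [Finset.disjoint_left]
    rintro x hx hx'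
    obtain ⟨a, ha, rfl⟩ := Finset.mem_image.mp hx
    obtain ⟨b, hb, hab⟩ := Finset.mem_image.mp hx'
    have : b = a := heinj b (hB b hb) a (hA a ha) hab
    exact Finset.disjoint_left.mp hd ha (this ▸ hb)
  · rintro ⟨x, hxA, hxB, hadj, hnadj⟩
    set y : S := f.symm x with hy
    apply hfail
    refine ⟨(y : ℕ), y.2, ?_, ?_, ?_, ?_⟩
    · intro hmem
      apply hxA
      refine Finset.mem_image.mpr ⟨(y : ℕ), hmem, ?_⟩
      simp only [he, dif_pos y.2]
      have : (⟨(y : ℕ), y.2⟩ : S) = y := rfl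
      rw [this, hy, f.apply_symm_apply]
    · intro hmem
      apply hxB
      refine Finset.mem_image.mpr ⟨(y : ℕ), hmem, ?_⟩
      simp only [he, dif_pos y.2]
      have : (⟨(y : ℕ), y.2⟩ : S) = y := rfl
      rw [this, hy, f.apply_symm_apply]
    · intro a ha
      have h1 : G.Adj x (e a) := hadj _ (Finset.mem_image.mpr ⟨a, ha, rfl⟩)
      simp only [he, dif_pos (hA a ha)] at h1
      have h2 : G.Adj (f y) (f ⟨a, hA a ha⟩) := by
        rw [hy, f.apply_symm_apply]; exact h1
      have := f.map_adj_iff.mp h2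
      exact this
    · intro b hb h1
      have h2 : G.Adj (f y) (f ⟨b, hB b hb⟩) := by
        apply f.map_adj_iff.mpr; exact h1
      rw [hy, f.apply_symm_apply] at h2
      have : G.Adj x (e b) := by simp only [he, dif_pos (hB b hb)]; exact h2
      exact hnadj _ (Finset.mem_image.mpr ⟨b, hb, rfl⟩) this
  · exact Finset.card_image_of_injOn fun a ha b hb => heinj a (hA a ha) b (hA b hb)
  · exact Finset.card_image_of_injOn fun a ha b hb => heinj a (hB a ha) b (hB b hb)

/-- Let `G` be a countably infinite graph with no isolated or universal
vertices that is not a random graph, and let `n ≥ 2` be least such that the extension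
axiom fails for some disjoint finite `A`, `B` with `|A| + |B| = n`.  For any partition
`A ∪ B = U₀ ⊔ U₁` into nonempty pieces, with
`X₀ = U₀ ∪ {x ∉ U₁ : x not correctly joined to U₀}` and `X₁` its complement, the induced
subgraph on `X₀` fails the extension axiom for `(A ∩ U₀, B ∩ U₀)`, the induced subgraph
on `X₁` fails it for `(A ∩ U₁, B ∩ U₁)`, and consequently neither `X₀` nor `X₁` is
isomorphic to `G`. -/
theorem partition_from_minimal_failing_pair (G : SimpleGraph ℕ)
    (h_no_isolated : ∀ x, ∃ y, G.Adj x y)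
    (h_no_universal : ∀ x, ∃ y, y ≠ x ∧ ¬ G.Adj x y)
    (n : ℕ) (hn2 : 2 ≤ n)
    (hn : IsLeast {m | ∃ A B : Finset ℕ, FailingPair G A B ∧ A.card + B.card = m} n)
    (A B : Finset ℕ) (hAB : FailingPair G A B) (hcard : A.card + B.card = n)
    (U₀ U₁ : Finset ℕ) (hU : U₀ ∪ U₁ = A ∪ B) (hUdisj : Disjoint U₀ U₁)
    (hU₀ : U₀.Nonempty) (hU₁ : U₁.Nonempty)
    (X₀ : Set ℕ)
    (hX₀ : X₀ = ↑U₀ ∪ {x | x ∉ U₁ ∧ NotCorrectlyJoined G A B U₀ x}) :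
    (¬ ∃ x ∈ X₀, x ∉ A ∩ U₀ ∧ x ∉ B ∩ U₀ ∧
        (∀ a ∈ A ∩ U₀, G.Adj x a) ∧ (∀ b ∈ B ∩ U₀, ¬ G.Adj x b)) ∧
    (¬ ∃ x ∈ X₀ᶜ, x ∉ A ∩ U₁ ∧ x ∉ B ∩ U₁ ∧
        (∀ a ∈ A ∩ U₁, G.Adj x a) ∧ (∀ b ∈ B ∩ U₁, ¬ G.Adj x b)) ∧
    ¬ Nonempty (G.induce X₀ ≃g G) ∧ ¬ Nonempty (G.induce X₀ᶜ ≃g G) := by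
  obtain ⟨hABd, hABfail⟩ := hAB
  -- Claim 1
  have claim1 : ¬ ∃ x ∈ X₀, x ∉ A ∩ U₀ ∧ x ∉ B ∩ U₀ ∧
      (∀ a ∈ A ∩ U₀, G.Adj x a) ∧ (∀ b ∈ B ∩ U₀, ¬ G.Adj x b) := by
    rintro ⟨x, hxX, hxA, hxB, hadj, hnadj⟩
    have hncj : ¬ NotCorrectlyJoined G A B U₀ x := by
      rintro (⟨a, ha, hna⟩ | ⟨b, hb, hb'⟩)
      · exact hna (hadj a ha)
      · exact hnadj b hb hb'
    rw [hX₀] at hxX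
    rcases hxX with hx | hx
    · -- x ∈ U₀
      have hxU₀ : x ∈ U₀ := hx
      have : x ∈ A ∪ B := by rw [← hU]; exact Finset.mem_union_left _ hxU₀
      rcases Finset.mem_union.mp this with h | h
      · exact hxA (Finset.mem_inter.mpr ⟨h, hxU₀⟩)
      · exact hxB (Finset.mem_inter.mpr ⟨h, hxU₀⟩)
    · exact hncj hx.2
  -- Claim 2
  have claim2 : ¬ ∃ x ∈ X₀ᶜ, x ∉ A ∩ U₁ ∧ x ∉ B ∩ U₁ ∧
      (∀ a ∈ A ∩ U₁, G.Adj x a) ∧ (∀ b ∈ B ∩ U₁, ¬ G.Adj x b) := by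
    rintro ⟨x, hxX, hxA, hxB, hadj, hnadj⟩
    rw [hX₀] at hxX
    simp only [Set.mem_compl_iff, Set.mem_union, Set.mem_setOf_eq, not_or, not_and] at hxX
    obtain ⟨hxU₀, hx2⟩ := hxX
    by_cases hxU₁ : x ∈ U₁
    · have : x ∈ A ∪ B := by rw [← hU]; exact Finset.mem_union_right _ hxU₁
      rcases Finset.mem_union.mp this with h | h
      · exact hxA (Finset.mem_inter.mpr ⟨h, hxU₁⟩)
      · exact hxB (Finset.mem_inter.mpr ⟨h, hxU₁⟩)
    · have hncj := hx2 hxU₁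
      rw [NotCorrectlyJoined] at hncj
      push_neg at hncj
      obtain ⟨hadj0, hnadj0⟩ := hncj
      apply hABfail
      have hxAB : x ∉ A ∪ B := by
        rw [← hU]
        simp only [Finset.mem_union, not_or]
        exact ⟨fun h => hxU₀ h, hxU₁⟩
      refine ⟨x, fun h => hxAB (Finset.mem_union_left _ h),
        fun h => hxAB (Finset.mem_union_right _ h), ?_, ?_⟩
      · intro a ha
        have : a ∈ U₀ ∪ U₁ := by rw [hU]; exact Finset.mem_union_left _ ha
        rcases Finset.mem_union.mp this with h | h
        · exact hadj0 a (Finset.mem_inter.mpr ⟨ha, h⟩)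
        · exact hadj a (Finset.mem_inter.mpr ⟨ha, h⟩)
      · intro b hb
        have : b ∈ U₀ ∪ U₁ := by rw [hU]; exact Finset.mem_union_right _ hb
        rcases Finset.mem_union.mp this with h | h
        · exact hnadj0 b (Finset.mem_inter.mpr ⟨hb, h⟩)
        · exact hnadj b (Finset.mem_inter.mpr ⟨hb, h⟩)
  -- cardinality facts
  have hAUd : ∀ U : Finset ℕ, U ⊆ A ∪ B → (A ∩ U).card + (B ∩ U).card = U.card := by
    intro U hsub
    rw [← Finset.card_union_of_disjoint
      (hABd.mono Finset.inter_subset_left Finset.inter_subset_left)]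
    congr 1
    rw [← Finset.union_inter_distrib_right]
    exact Finset.inter_eq_right.mpr hsub
  have hn' : U₀.card + U₁.card = n := by
    rw [← Finset.card_union_of_disjoint hUdisj, hU,
      Finset.card_union_of_disjoint hABd] at *
    exact hcard
  have hU₀sub : U₀ ⊆ A ∪ B := by rw [← hU]; exact Finset.subset_union_left
  have hU₁sub : U₁ ⊆ A ∪ B := by rw [← hU]; exact Finset.subset_union_right
  have hU₀lt : U₀.card < n := by
    have := Finset.card_pos.mpr hU₁; omega
  have hU₁lt : U₁.card < n := by
    have := Finset.card_pos.mpr hU₀; omega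
  refine ⟨claim1, claim2, ?_, ?_⟩
  · rintro ⟨f⟩
    have hAsub : ∀ a ∈ A ∩ U₀, a ∈ X₀ := by
      intro a ha
      rw [hX₀]; exact Or.inl (Finset.mem_inter.mp ha).2
    have hBsub : ∀ b ∈ B ∩ U₀, b ∈ X₀ := by
      intro b hb
      rw [hX₀]; exact Or.inl (Finset.mem_inter.mp hb).2
    have hd : Disjoint (A ∩ U₀) (B ∩ U₀) :=
      hABd.mono Finset.inter_subset_left Finset.inter_subset_left
    obtain ⟨A'', B'', hfp, hcA, hcB⟩ := transfer G X₀ _ _ hAsub hBsub hd claim1 f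
    have := hn.2 ⟨A'', B'', hfp, rfl⟩
    rw [hcA, hcB, hAUd U₀ hU₀sub] at this
    omega
  · rintro ⟨f⟩
    have hAsub : ∀ a ∈ A ∩ U₁, a ∈ X₀ᶜ := by
      intro a ha
      obtain ⟨haA, haU⟩ := Finset.mem_inter.mp ha
      rw [hX₀]
      simp only [Set.mem_compl_iff, Set.mem_union, Set.mem_setOf_eq, not_or, not_and]
      exact ⟨fun h => Finset.disjoint_left.mp hUdisj h haU, fun h => absurd haU h⟩
    have hBsub : ∀ b ∈ B ∩ U₁, b ∈ X₀ᶜ := by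
      intro b hb
      obtain ⟨hbB, hbU⟩ := Finset.mem_inter.mp hb
      rw [hX₀]
      simp only [Set.mem_compl_iff, Set.mem_union, Set.mem_setOf_eq, not_or, not_and]
      exact ⟨fun h => Finset.disjoint_left.mp hUdisj h hbU, fun h => absurd hbU h⟩
    have hd : Disjoint (A ∩ U₁) (B ∩ U₁) :=
      hABd.mono Finset.inter_subset_left Finset.inter_subset_left
    obtain ⟨A'', B'', hfp, hcA, hcB⟩ := transfer G X₀ᶜ _ _ hAsub hBsub hd claim2 f
    have := hn.2 ⟨A'', B'', hfp, rfl⟩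
    rw [hcA, hcB, hAUd U₁ hU₁sub] at this
    omega
end

section
/- Every computable graph has a computable copy in which the set of isolated vertices is computable. -/
/-!
Being non-isolated is only a c.e. property, but a non-isolated vertex `x` of a computable graph
has a decidable certificate: the pair `⟨x, y⟩` with `y` the least neighbour of `x`. Re-index the
graph so that the code `⟨x, y⟩` plays the role of `x` exactly when `y` is the least neighbour of
`x`, and let every other code be isolated. Adjacency stays computable, isolation becomes
computable, and when the original graph has infinitely many isolated vertices the two graphs are
isomorphic, both having countably infinitely many of them. Otherwise the isolated vertices form a
finite, hence computable, set and the graph itself will do.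
-/

namespace ComputablePred

variable {α β : Type*} [Primcodable α] [Primcodable β]

protected theorem and {p q : α → Prop} (hp : ComputablePred p) (hq : ComputablePred q) :
    ComputablePred fun a => p a ∧ q a := by
  classical
  refine Computable.computablePred ?_
  exact (Primrec.and.to_comp.comp hp.decide hq.decide).of_eq fun a => by simp

protected theorem or {p q : α → Prop} (hp : ComputablePred p) (hq : ComputablePred q) :
    ComputablePred fun a => p a ∨ q a := by
  classical
  refine Computable.computablePred ?_
  exact (Primrec.or.to_comp.comp hp.decide hq.decide).of_eq fun a => by simp

protected theorem comp {p : β → Prop} {f : α → β} (hp : ComputablePred p) (hf : Computable f) :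
    ComputablePred fun a => p (f a) := by
  classical
  exact (hp.decide.comp hf).computablePred

theorem eq {f g : α → β} (hf : Computable f) (hg : Computable g) :
    ComputablePred fun a => f a = g a := by
  classical
  exact (Primrec.eq.decide.to_comp.comp hf hg).computablePred

/-- `∀ n < m, p a n` holds iff `m` is the least `n` with `¬p a n ∨ n = m`, and that search is
total. -/
theorem forall_lt {p : α → ℕ → Prop} (hp : ComputablePred fun q : α × ℕ => p q.1 q.2) :
    ComputablePred fun q : α × ℕ => ∀ n < q.2, p q.1 n := by
  classical
  have hex (q : α × ℕ) : ∃ n, ¬p q.1 n ∨ n = q.2 := ⟨q.2, Or.inr rfl⟩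
  have hfind : Computable fun q : α × ℕ => Nat.find (hex q) :=
    Computable.find ((hp.comp (Computable.fst.comp Computable.fst |>.pair Computable.snd)).not.or
      (eq Computable.snd (Computable.snd.comp Computable.fst))) hex
  refine (eq hfind Computable.snd).of_eq fun q => ?_
  have hle : Nat.find (hex q) ≤ q.2 := Nat.find_min' _ (Or.inr rfl)
  constructor
  · intro h n hn
    by_contra hpn
    have := Nat.find_min' (hex q) (Or.inl hpn)
    omega
  · intro h
    refine le_antisymm hle (not_lt.1 fun hlt => ?_)
    exact (Nat.find_spec (hex q)).elim (· (h _ hlt)) hlt.ne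

theorem _root_.Set.Finite.computablePred {s : Set α} (hs : s.Finite) :
    ComputablePred (· ∈ s) := by
  induction s, hs using Set.Finite.induction_on with
  | empty => exact Computable.computablePred ((Computable.const false).of_eq fun _ => by simp)
  | @insert a s _ _ h => exact ((eq Computable.id (Computable.const a)).or h).of_eq (by simp)

end ComputablePred

namespace SimpleGraph

section Iso

variable {V W : Type*} {G : SimpleGraph V} {H : SimpleGraph W}

open Classical in
noncomputable def Iso.ofSupport (e : G.support ≃ H.support)
    (he : ∀ u v, H.Adj (e u) (e v) ↔ G.Adj u v) (f : ↥G.supportᶜ ≃ ↥H.supportᶜ) : G ≃g H :=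
  let φ : V ≃ W := (Equiv.Set.sumCompl G.support).symm.trans
    ((Equiv.sumCongr e f).trans (Equiv.Set.sumCompl H.support))
  have φ_mem {u} (hu : u ∈ G.support) : φ u = e ⟨u, hu⟩ := by
    simp [φ, Equiv.Set.sumCompl_symm_apply_of_mem hu]
  have φ_isIsolated {u} (hu : u ∉ G.support) : H.IsIsolated (φ u) := by
    simpa [φ, Equiv.Set.sumCompl_symm_apply_of_notMem hu] using
      H.notMem_support_iff_isIsolated.1 (f ⟨u, hu⟩).2
  ⟨φ, fun {u v} => by
    by_cases hu : u ∈ G.support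
    · by_cases hv : v ∈ G.support
      · rw [φ_mem hu, φ_mem hv]
        exact he ⟨u, hu⟩ ⟨v, hv⟩
      · rw [H.adj_comm, G.adj_comm]
        exact iff_of_false (φ_isIsolated hv _) (G.notMem_support_iff_isIsolated.1 hv _)
    · exact iff_of_false (φ_isIsolated hu _) (G.notMem_support_iff_isIsolated.1 hu _)⟩

end Iso

section LeastNeighbor

variable {V : Type*} [LinearOrder V] (G : SimpleGraph V)

def IsLeastNeighbor (x y : V) : Prop := G.Adj x y ∧ ∀ z < y, ¬G.Adj x z

variable {G}

theorem IsLeastNeighbor.unique {x y y' : V} (h : G.IsLeastNeighbor x y)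
    (h' : G.IsLeastNeighbor x y') : y = y' :=
  le_antisymm (not_lt.1 fun hlt => h.2 y' hlt h'.1) (not_lt.1 fun hlt => h'.2 y hlt h.1)

theorem exists_isLeastNeighbor [WellFoundedLT V] {x : V} (hx : x ∈ G.support) :
    ∃ y, G.IsLeastNeighbor x y := by
  obtain ⟨y, hy, hmin⟩ := wellFounded_lt.has_min {y | G.Adj x y} hx
  exact ⟨y, hy, fun z hz hxz => hmin z hxz hz⟩

end LeastNeighbor

/-- The vertex `Nat.pair x y` stands for `x` when `y` is the least neighbour of `x`; every other
vertex is isolated. -/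
def leastNeighborCopy (G : SimpleGraph ℕ) : SimpleGraph ℕ where
  Adj k l := G.IsLeastNeighbor k.unpair.1 k.unpair.2 ∧ G.IsLeastNeighbor l.unpair.1 l.unpair.2 ∧
    G.Adj k.unpair.1 l.unpair.1
  symm := ⟨fun _ _ h => ⟨h.2.1, h.1, h.2.2.symm⟩⟩
  loopless := ⟨fun _ h => G.irrefl h.2.2⟩

variable {G : SimpleGraph ℕ}

theorem leastNeighborCopy_adj {k l : ℕ} : G.leastNeighborCopy.Adj k l ↔
    G.IsLeastNeighbor k.unpair.1 k.unpair.2 ∧ G.IsLeastNeighbor l.unpair.1 l.unpair.2 ∧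
      G.Adj k.unpair.1 l.unpair.1 :=
  Iff.rfl

theorem mem_support_leastNeighborCopy {k : ℕ} :
    k ∈ G.leastNeighborCopy.support ↔ G.IsLeastNeighbor k.unpair.1 k.unpair.2 := by
  refine ⟨fun ⟨_, h⟩ => (leastNeighborCopy_adj.1 h).1, fun hk => ?_⟩
  obtain ⟨z, hz⟩ := exists_isLeastNeighbor hk.1.mem_support_right
  exact ⟨Nat.pair k.unpair.2 z,
    leastNeighborCopy_adj.2 ⟨hk, by simpa using hz, by simpa using hk.1⟩⟩

theorem infinite_compl_support_leastNeighborCopy : G.leastNeighborCopy.supportᶜ.Infinite :=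
  Set.infinite_of_injective_forall_mem (f := fun x => Nat.pair x x)
    (fun _ _ h => (Nat.pair_eq_pair.1 h).1)
    fun x hx => by simpa using (mem_support_leastNeighborCopy.1 hx).1

noncomputable def leastNeighborCopySupportEquiv : G.leastNeighborCopy.support ≃ G.support :=
  Equiv.ofBijective
    (fun k => ⟨k.1.unpair.1, (mem_support_leastNeighborCopy.1 k.2).1.mem_support_left⟩)
    ⟨fun k l hkl => by
      have hx : k.1.unpair.1 = l.1.unpair.1 := congrArg Subtype.val hkl
      have hy : k.1.unpair.2 = l.1.unpair.2 :=
        (mem_support_leastNeighborCopy.1 k.2).unique (hx ▸ mem_support_leastNeighborCopy.1 l.2)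
      exact Subtype.ext (Nat.pairEquiv.symm.injective (Prod.ext hx hy)),
     fun x => by
      obtain ⟨y, hy⟩ := exists_isLeastNeighbor x.2
      exact ⟨⟨Nat.pair x y, mem_support_leastNeighborCopy.2 (by simpa using hy)⟩, by simp⟩⟩

theorem adj_leastNeighborCopySupportEquiv (k l : G.leastNeighborCopy.support) :
    G.Adj (leastNeighborCopySupportEquiv k) (leastNeighborCopySupportEquiv l) ↔
      G.leastNeighborCopy.Adj k l :=
  ⟨fun h => ⟨mem_support_leastNeighborCopy.1 k.2, mem_support_leastNeighborCopy.1 l.2, h⟩,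
    fun h => h.2.2⟩

theorem nonempty_iso_leastNeighborCopy (h : G.supportᶜ.Infinite) :
    Nonempty (G ≃g G.leastNeighborCopy) := by
  have := h.to_subtype
  have := infinite_compl_support_leastNeighborCopy (G := G) |>.to_subtype
  obtain ⟨f⟩ :=
    nonempty_equiv_of_countable (α := ↥G.supportᶜ) (β := ↥G.leastNeighborCopy.supportᶜ)
  refine ⟨Iso.ofSupport leastNeighborCopySupportEquiv.symm (fun u v => ?_) f⟩
  simpa using (adj_leastNeighborCopySupportEquiv (leastNeighborCopySupportEquiv.symm u)
    (leastNeighborCopySupportEquiv.symm v)).symm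

theorem computablePred_isLeastNeighbor (hG : ComputablePred fun p : ℕ × ℕ => G.Adj p.1 p.2) :
    ComputablePred fun p : ℕ × ℕ => G.IsLeastNeighbor p.1 p.2 :=
  hG.and (ComputablePred.forall_lt (p := fun x z => ¬G.Adj x z) hG.not)

theorem computablePred_leastNeighborCopy_adj
    (hG : ComputablePred fun p : ℕ × ℕ => G.Adj p.1 p.2) :
    ComputablePred fun p : ℕ × ℕ => G.leastNeighborCopy.Adj p.1 p.2 := by
  have hL := computablePred_isLeastNeighbor hG
  have hk : Computable fun p : ℕ × ℕ => p.1.unpair := Primrec.unpair.to_comp.comp .fst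
  have hl : Computable fun p : ℕ × ℕ => p.2.unpair := Primrec.unpair.to_comp.comp .snd
  exact (hL.comp hk).and <| (hL.comp hl).and <|
    hG.comp <| (Computable.fst.comp hk).pair (Computable.fst.comp hl)

theorem computablePred_isIsolated_leastNeighborCopy
    (hG : ComputablePred fun p : ℕ × ℕ => G.Adj p.1 p.2) :
    ComputablePred G.leastNeighborCopy.IsIsolated :=
  ((computablePred_isLeastNeighbor hG).comp Primrec.unpair.to_comp).not.of_eq fun _ => by
    rw [← notMem_support_iff_isIsolated, mem_support_leastNeighborCopy]

end SimpleGraph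

/-- Every computable graph has a computable copy in which the set of
isolated vertices is computable.  A computable graph is a graph on `ℕ` whose edge
relation is computable; a computable copy is a computable graph isomorphic to it (the
isomorphism need not be computable). -/
theorem computable_copy_with_computable_isolated_set (G : SimpleGraph ℕ)
    (hG : ComputablePred fun p : ℕ × ℕ => G.Adj p.1 p.2) :
    ∃ H : SimpleGraph ℕ,
      ComputablePred (fun p : ℕ × ℕ => H.Adj p.1 p.2) ∧
      Nonempty (G ≃g H) ∧
      ComputablePred (fun x => ∀ y, ¬ H.Adj x y) := by
  by_cases hfin : G.supportᶜ.Finite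
  · exact ⟨G, hG, ⟨.refl⟩,
      hfin.computablePred.of_eq fun _ => G.notMem_support_iff_isIsolated⟩
  · exact ⟨G.leastNeighborCopy, SimpleGraph.computablePred_leastNeighborCopy_adj hG,
      SimpleGraph.nonempty_iso_leastNeighborCopy hfin,
      SimpleGraph.computablePred_isIsolated_leastNeighborCopy hG⟩
end
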